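/- Consider the six single-qubit states |φ_1⟩ = |0⟩, |φ_2⟩ = |1⟩, |φ_3⟩ = |+⟩, |φ_4⟩ = |−⟩, |φ_5⟩ = (|0⟩+i|1⟩)/√2, |φ_6⟩ = (|0⟩−i|1⟩)/√2. For every quantum channel Φ from 2×2 complex matrices to 4×4 complex matrices (given by Kraus operators A_i with Σ_i A_i*A_i = I), the average cloning success probability (1/6) Σ_{k=1}^{6} ⟨φ_k ⊗ φ_k| Φ(|φ_k⟩⟨φ_k|) |φ_k ⊗ φ_k⟩ is at most 2/3. -/

import Mathlib

open Matrix

/-- The six single-qubit states `|0⟩, |1⟩, |+⟩, |−⟩, (|0⟩+i|1⟩)/√2, (|0⟩−i|1⟩)/√2`. -/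
noncomputable def sixStates : Fin 6 → (Fin 2 → ℂ)
  | 0 => ![1, 0]
  | 1 => ![0, 1]
  | 2 => ![(Real.sqrt 2 : ℂ)⁻¹, (Real.sqrt 2 : ℂ)⁻¹]
  | 3 => ![(Real.sqrt 2 : ℂ)⁻¹, -(Real.sqrt 2 : ℂ)⁻¹]
  | 4 => ![(Real.sqrt 2 : ℂ)⁻¹, Complex.I * (Real.sqrt 2 : ℂ)⁻¹]
  | 5 => ![(Real.sqrt 2 : ℂ)⁻¹, -(Complex.I * (Real.sqrt 2 : ℂ)⁻¹)]

/-- Tensor product of two qubit vectors, as a vector on `Fin 2 × Fin 2`. -/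
def tens (u v : Fin 2 → ℂ) : Fin 2 × Fin 2 → ℂ := fun p => u p.1 * v p.2

/-! For a Kraus operator `A`, the cloning amplitudes of `|0⟩` and `|1⟩` are single entries of `A`,
while for the four equatorial states `(|0⟩ + ω|1⟩)/√2` with `ω⁴ = 1` the amplitude is
`2^(-3/2) p(ω)` for a cubic `p` whose coefficients are sums of entries of `A`. Parseval over the
fourth roots of unity turns these four contributions into half the squared norm of the coefficient
vector of `p`, and an elementary estimate then bounds the six amplitudes by twice the squared
Frobenius norm of `A`. Summed over the Kraus operators, the Frobenius norms give
`tr (∑ Aᵢᴴ Aᵢ) = tr 1 = 2`. -/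

open Complex ComplexConjugate

lemma sum_normSq_eq_trace_conjTranspose_mul_self {m n : Type*} [Fintype m] [Fintype n]
    (A : Matrix m n ℂ) : ((∑ p, ∑ j, normSq (A p j) : ℝ) : ℂ) = (Aᴴ * A).trace := by
  rw [← star_vec_dotProduct_vec, dotProduct, Fintype.sum_prod_type, Finset.sum_comm]
  push_cast
  simp [Matrix.vec, normSq_eq_conj_mul_self]

lemma sum_normSq_eq_card_of_sum_conjTranspose_mul_self_eq_one
    {ι m n : Type*} [Fintype ι] [Fintype m] [Fintype n] [DecidableEq n]
    (A : ι → Matrix m n ℂ) (hA : ∑ i, (A i)ᴴ * A i = 1) :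
    ∑ i, ∑ p, ∑ j, normSq (A i p j) = Fintype.card n := by
  apply ofReal_injective
  push_cast
  simp only [← ofReal_sum, sum_normSq_eq_trace_conjTranspose_mul_self]
  rw [← Matrix.trace_sum, hA, Matrix.trace_one]

lemma conj_eq_pow_three_of_pow_four_eq_one {ω : ℂ} (hω : ω ^ 4 = 1) : conj ω = ω ^ 3 := by
  have hnorm : ‖ω‖ = 1 :=
    (pow_eq_one_iff_of_nonneg (norm_nonneg ω) four_ne_zero).1 (by rw [← norm_pow, hω, norm_one])
  rw [← inv_eq_conj hnorm, inv_eq_of_mul_eq_one_right (by rw [← pow_succ', hω])]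

lemma normSq_add_half_normSq_add_add_le (a d f : ℂ) :
    normSq a + normSq (a + d + f) / 2 ≤ 2 * (normSq a + normSq d + normSq f) := by
  simp only [normSq_apply, add_re, add_im]
  nlinarith [sq_nonneg (a.re - d.re - f.re), sq_nonneg (a.im - d.im - f.im),
    sq_nonneg (d.re - f.re), sq_nonneg (d.im - f.im)]

lemma sum_normSq_eval_fourthRoots (x₀ x₁ x₂ x₃ : ℂ) :
    let p : ℂ → ℂ := fun ω => x₀ + ω * x₁ + ω ^ 2 * x₂ + ω ^ 3 * x₃
    normSq (p 1) + normSq (p (-1)) + normSq (p I) + normSq (p (-I))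
      = 4 * (normSq x₀ + normSq x₁ + normSq x₂ + normSq x₃) := by
  simp only [normSq_apply, add_re, add_im, mul_re, mul_im, pow_succ, pow_zero, one_mul,
    neg_re, neg_im, one_re, one_im, I_re, I_im]
  ring

section TwoQubits

variable (A : Matrix (Fin 2 × Fin 2) (Fin 2) ℂ)

lemma star_tens_dotProduct_mulVec (u : Fin 2 → ℂ) :
    star (tens u u) ⬝ᵥ A *ᵥ u
      = conj (u 0) ^ 2 * (A (0, 0) 0 * u 0 + A (0, 0) 1 * u 1)
        + conj (u 0) * conj (u 1)
          * ((A (0, 1) 0 + A (1, 0) 0) * u 0 + (A (0, 1) 1 + A (1, 0) 1) * u 1)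
        + conj (u 1) ^ 2 * (A (1, 1) 0 * u 0 + A (1, 1) 1 * u 1) := by
  simp only [tens, dotProduct, Matrix.mulVec, Fintype.sum_prod_type, Fin.sum_univ_two,
    Pi.star_apply, star_def, map_mul]
  ring

lemma star_tens_dotProduct_mulVec_of_pow_four_eq_one (r : ℝ) {ω : ℂ} (hω : ω ^ 4 = 1) :
    star (tens ![(r : ℂ), r * ω] ![(r : ℂ), r * ω]) ⬝ᵥ A *ᵥ ![(r : ℂ), r * ω]
      = r ^ 3 * ((A (0, 0) 0 + A (0, 1) 1 + A (1, 0) 1) + ω * A (0, 0) 1 + ω ^ 2 * A (1, 1) 0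
        + ω ^ 3 * (A (1, 1) 1 + A (0, 1) 0 + A (1, 0) 0)) := by
  rw [star_tens_dotProduct_mulVec]
  simp only [Matrix.cons_val_zero, Matrix.cons_val_one, map_mul, conj_ofReal,
    conj_eq_pow_three_of_pow_four_eq_one hω]
  linear_combination
    r ^ 3 * (A (0, 1) 1 + A (1, 0) 1 + ω ^ 2 * A (1, 1) 0 + ω ^ 3 * A (1, 1) 1) * hω

lemma sum_normSq_cloning_sixStates_le :
    ∑ k : Fin 6, normSq (star (tens (sixStates k) (sixStates k)) ⬝ᵥ A *ᵥ sixStates k)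
      ≤ 2 * ∑ p, ∑ j, normSq (A p j) := by
  set r : ℝ := (√2)⁻¹
  have hr : r ^ 2 = 1 / 2 := by simp [r, inv_pow]
  have hstate : ∀ (k : Fin 6) (ω : ℂ), sixStates k = ![(r : ℂ), r * ω] → ω ^ 4 = 1 →
      normSq (star (tens (sixStates k) (sixStates k)) ⬝ᵥ A *ᵥ sixStates k)
        = normSq ((A (0, 0) 0 + A (0, 1) 1 + A (1, 0) 1) + ω * A (0, 0) 1 + ω ^ 2 * A (1, 1) 0
            + ω ^ 3 * (A (1, 1) 1 + A (0, 1) 0 + A (1, 0) 0)) / 8 := by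
    intro k ω hk hω
    rw [hk, star_tens_dotProduct_mulVec_of_pow_four_eq_one A r hω, map_mul, map_pow,
      normSq_ofReal, ← sq, hr]
    ring
  have h0 : star (tens (sixStates 0) (sixStates 0)) ⬝ᵥ A *ᵥ sixStates 0 = A (0, 0) 0 := by
    simp [star_tens_dotProduct_mulVec, sixStates]
  have h1 : star (tens (sixStates 1) (sixStates 1)) ⬝ᵥ A *ᵥ sixStates 1 = A (1, 1) 1 := by
    simp [star_tens_dotProduct_mulVec, sixStates]
  rw [Fin.sum_univ_six, h0, h1,
    hstate 2 1 (by ext i; fin_cases i <;> simp [sixStates, r]) (by norm_num),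
    hstate 3 (-1) (by ext i; fin_cases i <;> simp [sixStates, r]) (by norm_num),
    hstate 4 I (by ext i; fin_cases i <;> simp [sixStates, r, mul_comm]) (by norm_num),
    hstate 5 (-I) (by ext i; fin_cases i <;> simp [sixStates, r, mul_comm]) (by norm_num)]
  have hparseval := sum_normSq_eval_fourthRoots (A (0, 0) 0 + A (0, 1) 1 + A (1, 0) 1)
    (A (0, 0) 1) (A (1, 1) 0) (A (1, 1) 1 + A (0, 1) 0 + A (1, 0) 0)
  have hleft := normSq_add_half_normSq_add_add_le (A (0, 0) 0) (A (0, 1) 1) (A (1, 0) 1)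
  have hright := normSq_add_half_normSq_add_add_le (A (1, 1) 1) (A (0, 1) 0) (A (1, 0) 0)
  simp only [Fintype.sum_prod_type, Fin.sum_univ_two]
  linear_combination hleft + hright + hparseval / 8 + (3 / 2 : ℝ) * normSq_nonneg (A (0, 0) 1)
    + (3 / 2 : ℝ) * normSq_nonneg (A (1, 1) 0)

end TwoQubits

/-- For every quantum channel from qubits to two qubits (given by Kraus operators
`A i` with `∑ i, (A i)ᴴ * A i = 1`), the average cloning success probability over the
six states, namely `(1/6) ∑ k ⟨φ_k ⊗ φ_k| Φ(|φ_k⟩⟨φ_k|) |φ_k ⊗ φ_k⟩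
= (1/6) ∑ k ∑ i |⟨φ_k ⊗ φ_k| A i |φ_k⟩|²`, is at most `2/3`. -/
theorem sixState_counterfeit_bound {ι : Type} [Fintype ι]
    (A : ι → Matrix (Fin 2 × Fin 2) (Fin 2) ℂ)
    (hA : ∑ i, (A i)ᴴ * A i = 1) :
    (1 / 6 : ℝ) * ∑ k : Fin 6, ∑ i,
        Complex.normSq
          (star (tens (sixStates k) (sixStates k)) ⬝ᵥ (A i).mulVec (sixStates k))
      ≤ 2 / 3 := by
  calc (1 / 6 : ℝ) * ∑ k : Fin 6, ∑ i,
        normSq (star (tens (sixStates k) (sixStates k)) ⬝ᵥ (A i).mulVec (sixStates k))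
      = (1 / 6) * ∑ i, ∑ k : Fin 6,
        normSq (star (tens (sixStates k) (sixStates k)) ⬝ᵥ (A i).mulVec (sixStates k)) := by
        rw [Finset.sum_comm]
    _ ≤ (1 / 6) * ∑ i, 2 * ∑ p, ∑ j, normSq (A i p j) := by
        gcongr with i
        exact sum_normSq_cloning_sixStates_le (A i)
    _ = 2 / 3 := by
        rw [← Finset.mul_sum, sum_normSq_eq_card_of_sum_conjTranspose_mul_self_eq_one A hA,
          Fintype.card_fin]
        norm_num
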